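/- For every c > 0 and every x ∈ ℝ, sup_{u > 0} u^{−1} ∫_{x−u/2}^{x+u/2} exp(−c|y|) dy ≤ min(1, 2/(c|x|)) (with the convention that the right-hand side equals 1 when x = 0). -/

import Mathlib

/-! The average of `e^{-c|y|}` over a window is at most its supremum `1`. A window of length
`u ≥ |x|` carries at most the total mass `2 / c`, so the average is at most `2 / (c u)`. A window
of length `u < |x|` stays at distance `≥ |x| / 2` from the origin, where the integrand is at most
`e^{-c|x|/2} ≤ 2 / (c|x|)`. -/

open MeasureTheory Set Real

lemma integral_exp_neg_mul_abs {c : ℝ} (hc : 0 < c) : ∫ y, exp (-c * |y|) = 2 / c := by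
  rw [integral_comp_abs (f := fun y => exp (-c * y)), integral_exp_mul_Ioi (neg_neg_of_pos hc)]
  simp only [mul_zero, exp_zero]
  field_simp

lemma integrable_exp_neg_mul_abs {c : ℝ} (hc : 0 < c) :
    Integrable fun y : ℝ => exp (-c * |y|) :=
  .of_integral_ne_zero (by rw [integral_exp_neg_mul_abs hc]; positivity)

lemma exp_neg_le_inv {t : ℝ} (ht : 0 < t) : exp (-t) ≤ t⁻¹ := by
  rw [exp_neg]
  exact inv_anti₀ ht (by linarith [add_one_le_exp t])

lemma setIntegral_Icc_le_of_abs_le {f : ℝ → ℝ} {a b M : ℝ} (hab : a ≤ b)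
    (hf : ∀ y ∈ Icc a b, |f y| ≤ M) : ∫ y in Icc a b, f y ≤ M * (b - a) := by
  have h := norm_setIntegral_le_of_norm_le_const (f := f) (measure_Icc_lt_top (μ := volume)) hf
  rw [volume_real_Icc_of_le hab] at h
  exact (le_abs_self _).trans h

lemma window_average_le_of_abs_le {f : ℝ → ℝ} {x u M : ℝ} (hu : 0 < u)
    (hf : ∀ y ∈ Icc (x - u / 2) (x + u / 2), |f y| ≤ M) :
    u⁻¹ * ∫ y in Icc (x - u / 2) (x + u / 2), f y ≤ M := by
  have h := setIntegral_Icc_le_of_abs_le (by linarith) hf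
  rw [inv_mul_le_iff₀ hu]
  linarith

lemma half_abs_le_abs_of_mem_window {x u y : ℝ} (hux : u ≤ |x|)
    (hy : y ∈ Icc (x - u / 2) (x + u / 2)) : |x| / 2 ≤ |y| := by
  have hyx : |x - y| ≤ u / 2 := abs_sub_le_iff.2 ⟨by linarith [hy.1], by linarith [hy.2]⟩
  linarith [abs_sub_abs_le_abs_sub x y]

/-- For every `c > 0` and `x ∈ ℝ`,
`sup_{u > 0} u⁻¹ ∫_{x-u/2}^{x+u/2} e^{-c|y|} dy ≤ min(1, 2/(c|x|))`
(with the right-hand side interpreted as `1` when `x = 0`). -/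
theorem average_exp_window_bound (c : ℝ) (hc : 0 < c) (x : ℝ) :
    ∀ u > (0 : ℝ),
      u⁻¹ * ∫ y in Icc (x - u / 2) (x + u / 2), Real.exp (-c * |y|) ≤
        if x = 0 then 1 else min 1 (2 / (c * |x|)) := by
  intro u hu
  have h_one : u⁻¹ * ∫ y in Icc (x - u / 2) (x + u / 2), exp (-c * |y|) ≤ 1 :=
    window_average_le_of_abs_le hu fun y _ => by
      rw [abs_of_pos (exp_pos _), exp_le_one_iff]
      nlinarith [abs_nonneg y]
  split_ifs with hx
  · exact h_one
  refine le_min h_one ?_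
  have hx_pos : 0 < |x| := abs_pos.2 hx
  rcases le_total |x| u with hxu | hux
  · calc u⁻¹ * ∫ y in Icc (x - u / 2) (x + u / 2), exp (-c * |y|)
          ≤ u⁻¹ * (2 / c) := by
            rw [← integral_exp_neg_mul_abs hc]
            exact mul_le_mul_of_nonneg_left (setIntegral_le_integral
              (integrable_exp_neg_mul_abs hc) (.of_forall fun y => (exp_pos _).le)) (by positivity)
        _ ≤ |x|⁻¹ * (2 / c) := by gcongr
        _ = 2 / (c * |x|) := by field_simp
  · calc u⁻¹ * ∫ y in Icc (x - u / 2) (x + u / 2), exp (-c * |y|)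
          ≤ exp (-(c * |x| / 2)) :=
            window_average_le_of_abs_le hu fun y hy => by
              rw [abs_of_pos (exp_pos _), exp_le_exp]
              nlinarith [half_abs_le_abs_of_mem_window hux hy]
        _ ≤ (c * |x| / 2)⁻¹ := exp_neg_le_inv (by positivity)
        _ = 2 / (c * |x|) := by rw [inv_div]
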